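/- arXiv:0907.2748 — 2 statements merged into one kernel-verified Lean document; each statement's English description precedes it below -/
import Mathlib

section
/- Let σ ∈ (0,1) be fixed and n ≥ 1 an integer. Define f_n(x) := h_{n-1}(x/σ) + g_{n-1}(x/σ) exp(x²/(2σ²)) ∫_{-∞}^{x/σ} exp(-t²/2) dt - σ^{2n} h_{n-1}(x) + σ^{2n} g_{n-1}(x) exp(x²/2) ∫_x^∞ exp(-t²/2) dt. Then there exists a unique x₀ < 0 such that f_n(x₀) = 0. -/
open Nat Finset MeasureTheory Real

noncomputable def gp (n : ℕ) (x : ℝ) : ℝ :=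
  ∑ i ∈ Finset.range (n+1), ((2*n+1)! : ℝ) / ((2*(n-i))‼ * (2*i+1)!) * x^(2*i+1)

noncomputable def hp (n : ℕ) (x : ℝ) : ℝ :=
  ∑ i ∈ Finset.range (n+1), ((n+i)! * (n-i)! : ℝ) / ((2*(n-i))‼ * (2*i)!) *
    (∑ j ∈ Finset.range (n-i+1), ((2*n+1).choose j : ℝ)) * x^(2*i)

/-- term of q-polynomial -/
noncomputable def qt (m k : ℕ) (y : ℝ) : ℝ :=
  if 2*k ≤ m then ((m)! : ℝ) / ((m-2*k)! * (2*k)‼) * y^(m-2*k) else 0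

noncomputable def qq (m : ℕ) (y : ℝ) : ℝ := ∑ k ∈ Finset.range (m+1), qt m k y

/-- partial binomial sum -/
noncomputable def S (m k : ℕ) : ℝ := ∑ j ∈ Finset.range (k+1), (m.choose j : ℝ)

/-- term of p-polynomial -/
noncomputable def pt (m k : ℕ) (y : ℝ) : ℝ :=
  if 2*k+1 ≤ m then ((m-1-k)! * k ! : ℝ) / ((2*k)‼ * (m-1-2*k)!) * S m k * y^(m-1-2*k) else 0

noncomputable def pp (m : ℕ) (y : ℝ) : ℝ := ∑ k ∈ Finset.range (m+1), pt m k y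

lemma qq_eq_sum (m N : ℕ) (h : m + 1 ≤ N) (y : ℝ) :
    qq m y = ∑ k ∈ Finset.range N, qt m k y := by
  rw [qq]
  refine Finset.sum_subset (Finset.range_subset_range.2 h) ?_
  intro k _ hk
  simp only [Finset.mem_range, not_lt] at hk
  rw [qt, if_neg (by omega)]

lemma pp_eq_sum (m N : ℕ) (h : m + 1 ≤ N) (y : ℝ) :
    pp m y = ∑ k ∈ Finset.range N, pt m k y := by
  rw [pp]
  refine Finset.sum_subset (Finset.range_subset_range.2 h) ?_
  intro k _ hk
  simp only [Finset.mem_range, not_lt] at hk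
  rw [pt, if_neg (by omega)]

lemma qt_step (m k : ℕ) (y : ℝ) :
    qt (m+2) (k+1) y = y * qt (m+1) (k+1) y + (m+1) * qt m k y := by
  rcases le_or_gt (2*k+2) (m+1) with h1 | h1
  · -- all guards true
    rw [qt, if_pos (by omega), qt, if_pos (by omega), qt, if_pos (by omega)]
    have e1 : m + 2 - 2*(k+1) = m - 2*k := by omega
    have e2 : m + 1 - 2*(k+1) = m - 2*k - 1 := by omega
    rw [e1, e2]
    have e3 : m - 2*k = (m - 2*k - 1) + 1 := by omega
    have hmkR' : ((m - 2*k - 1 : ℕ) : ℝ) = (m:ℝ) - 2*k - 1 := by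
      have h5 : m - 2*k - 1 = m - (2*k+1) := by omega
      rw [h5, Nat.cast_sub (by omega)]; push_cast; ring
    have hf1 : ((m+2)! : ℝ) = (m+2) * (m+1)! := by
      push_cast [Nat.factorial_succ (m+1)]; ring
    have hf2 : ((m - 2*k)! : ℝ) = ((m:ℝ) - 2*k) * (m - 2*k - 1)! := by
      rw [e3, Nat.factorial_succ]; push_cast; rw [hmkR']; ring
    have hf3 : ((2*(k+1))‼ : ℝ) = (2*k+2) * (2*k)‼ := by
      have : 2*(k+1) = 2*k+2 := by omega
      rw [this, Nat.doubleFactorial_add_two]; push_cast; ring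
    have hy : y^(m-2*k) = y * y^(m-2*k-1) := by
      conv_lhs => rw [e3]
      rw [pow_succ]; ring
    have hm1 : ((m+1)! : ℝ) ≠ 0 := by positivity
    have hd1 : ((m - 2*k - 1)! : ℝ) ≠ 0 := by positivity
    have hd2 : ((2*k)‼ : ℝ) ≠ 0 := by
      exact_mod_cast Nat.cast_ne_zero.2 (Nat.doubleFactorial_pos _).ne'
    have hmk : (1:ℝ) ≤ ((m:ℝ) - 2*k) := by
      have h6 : (2*k+1 : ℕ) ≤ m := by omega
      have h7 := (Nat.cast_le (α := ℝ)).2 h6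
      push_cast at h7; linarith
    have hmk0 : ((m:ℝ) - 2*k) ≠ 0 := by linarith
    have hmkR : ((m - 2*k : ℕ) : ℝ) = (m:ℝ) - 2*k := by
      push_cast [Nat.cast_sub (by omega : 2*k ≤ m)]; ring
    have hf0 : ((m+1)! : ℝ) = (m+1) * (m)! := by
      push_cast [Nat.factorial_succ m]; ring
    rw [hf1, hf2, hf3, hy, hf0]
    field_simp
    ring
  · rcases le_or_gt (2*k) m with h2 | h2
    · -- 2k+2 = m+2 case (m = 2k)
      have hm : m = 2*k := by omega
      subst hm
      rw [qt, if_pos (by omega), qt, if_neg (by omega), qt, if_pos (by omega)]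
      have e1 : 2*k + 2 - 2*(k+1) = 0 := by omega
      have e2 : 2*k - 2*k = 0 := by omega
      rw [e1, e2]
      have hf1 : ((2*k+2)! : ℝ) = (2*k+2) * (2*k+1) * (2*k)! := by
        push_cast [Nat.factorial_succ (2*k+1), Nat.factorial_succ (2*k)]; ring
      have hf3 : ((2*(k+1))‼ : ℝ) = (2*k+2) * (2*k)‼ := by
        have : 2*(k+1) = 2*k+2 := by omega
        rw [this, Nat.doubleFactorial_add_two]; push_cast; ring
      have hd2 : ((2*k)‼ : ℝ) ≠ 0 := by
        exact_mod_cast Nat.cast_ne_zero.2 (Nat.doubleFactorial_pos _).ne'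
      rw [hf1, hf3]
      simp only [Nat.factorial_zero, pow_zero]
      field_simp
      push_cast; ring
    · -- all guards false
      rw [qt, if_neg (by omega), qt, if_neg (by omega), qt, if_neg (by omega)]
      ring

lemma qq_rec (m : ℕ) (y : ℝ) : qq (m+2) y = y * qq (m+1) y + (m+1) * qq m y := by
  rw [qq_eq_sum (m+2) (m+3) (by omega), qq_eq_sum (m+1) (m+3) (by omega),
    qq_eq_sum m (m+2) (by omega)]
  rw [Finset.sum_range_succ' (fun k => qt (m+2) k y) (m+2),
    Finset.sum_range_succ' (fun k => qt (m+1) k y) (m+2)]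
  have h0 : qt (m+2) 0 y = y * qt (m+1) 0 y := by
    rw [qt, if_pos (by omega), qt, if_pos (by omega)]
    norm_num [Nat.doubleFactorial]
    rw [div_self (by positivity : ((m+2)! : ℝ) ≠ 0),
      div_self (by positivity : ((m+1)! : ℝ) ≠ 0), pow_succ]
    ring
  simp only [qt_step m _ y]
  rw [Finset.sum_add_distrib, ← Finset.mul_sum, ← Finset.mul_sum, mul_add, h0]
  ring

lemma S_top (m k : ℕ) : S m (k+1) = S m k + (m.choose (k+1) : ℝ) := by
  rw [S, S, Finset.sum_range_succ]

lemma S_succ (m k : ℕ) : S (m+1) (k+1) = S m (k+1) + S m k := by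
  unfold S
  rw [Finset.sum_range_succ' (fun j => (((m+1).choose j : ℕ) : ℝ)) (k+1),
    Finset.sum_range_succ' (fun j => ((m.choose j : ℕ) : ℝ)) (k+1)]
  simp only [Nat.choose_succ_succ, Nat.cast_add, Nat.choose_zero_right]
  rw [Finset.sum_add_distrib]
  push_cast
  ring

lemma TT (m k : ℕ) (h : 2*k+1 ≤ m) :
    ((m:ℝ)+1-k) * S (m+3) (k+1) = ((m:ℝ)-2*k) * S (m+2) (k+1) + 2*(m+2) * S (m+1) k := by
  set P := S (m+1) k with hP
  set c := (((m+1).choose (k+1) : ℕ) : ℝ) with hc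
  set d := (((m+1).choose k : ℕ) : ℝ) with hd
  have e0 : S (m+1) (k+1) = P + c := S_top (m+1) k
  have e2 : S (m+2) (k+1) = 2*P + c := by
    rw [S_succ (m+1) k, e0]; ring
  have e2' : S (m+2) k = 2*P - d := by
    have := S_top (m+2) k
    have hch : (((m+2).choose (k+1) : ℕ) : ℝ) = d + c := by
      have : (m+2).choose (k+1) = (m+1).choose k + (m+1).choose (k+1) :=
        Nat.choose_succ_succ (m+1) k
      rw [this]; push_cast; ring
    have := S_top (m+2) k
    rw [hch, e2] at this
    linarith
  have e3 : S (m+3) (k+1) = 4*P + c - d := by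
    rw [S_succ (m+2) k, e2, e2']; ring
  have rel : ((k:ℝ)+1) * c = ((m:ℝ)+1-k) * d := by
    have hrel := Nat.choose_succ_right_eq (m+1) k
    have : (((m+1).choose (k+1) * (k+1) : ℕ) : ℝ) = (((m+1).choose k * (m+1-k) : ℕ) : ℝ) :=
      congrArg (Nat.cast (R := ℝ)) hrel
    push_cast [Nat.cast_sub (show k ≤ m+1 by omega)] at this
    linarith [this]
  rw [e2, e3]
  linear_combination rel

lemma pt_zero (M : ℕ) (y : ℝ) (h : 1 ≤ M) : pt M 0 y = y^(M-1) := by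
  rw [pt, if_pos (by omega)]
  have : S M 0 = 1 := by simp [S]
  simp [this, Nat.doubleFactorial]
  rw [div_self (by positivity : ((M-1)! : ℝ) ≠ 0)]
  simp

lemma pt_step (m k : ℕ) (y : ℝ) :
    pt (m+3) (k+1) y = y * pt (m+2) (k+1) y + (m+2) * pt (m+1) k y := by
  rcases le_or_gt (2*k+1) m with h1 | h1
  · rw [pt, if_pos (by omega), pt, if_pos (by omega), pt, if_pos (by omega)]
    have e1 : m+3-1-(k+1) = m+1-k := by omega
    have e2 : m+3-1-2*(k+1) = m-2*k := by omega
    have e3 : m+2-1-(k+1) = m-k := by omega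
    have e4 : m+2-1-2*(k+1) = m-1-2*k := by omega
    have e5 : m+1-1-k = m-k := by omega
    have e6 : m+1-1-2*k = m-2*k := by omega
    rw [e1, e2, e3, e4, e5, e6]
    have hfa : ((m+1-k)! : ℝ) = ((m:ℝ)+1-k) * (m-k)! := by
      have h7 : m+1-k = (m-k)+1 := by omega
      rw [h7, Nat.factorial_succ]
      push_cast [Nat.cast_sub (show k ≤ m by omega)]
      ring
    have hfb : ((m-2*k)! : ℝ) = ((m:ℝ)-2*k) * (m-1-2*k)! := by
      have h7 : m-2*k = (m-1-2*k)+1 := by omega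
      rw [h7, Nat.factorial_succ]
      have h8 : ((m-1-2*k : ℕ) : ℝ) = (m:ℝ)-1-2*k := by
        have h9 : m-1-2*k = m - (2*k+1) := by omega
        rw [h9, Nat.cast_sub (by omega)]; push_cast; ring
      push_cast
      rw [h8]; ring
    have hfc : ((k+1)! : ℝ) = (k+1) * k ! := by
      rw [Nat.factorial_succ]; push_cast; ring
    have hfd : ((2*(k+1))‼ : ℝ) = (2*k+2) * (2*k)‼ := by
      have : 2*(k+1) = 2*k+2 := by omega
      rw [this, Nat.doubleFactorial_add_two]; push_cast; ring
    have hy : y^(m-2*k) = y * y^(m-1-2*k) := by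
      have h7 : m-2*k = (m-1-2*k)+1 := by omega
      conv_lhs => rw [h7]
      rw [pow_succ]; ring
    rw [hfa, hfb, hfc, hfd, hy]
    have htt := TT m k h1
    have hd2 : ((2*k)‼ : ℝ) ≠ 0 := by
      exact_mod_cast Nat.cast_ne_zero.2 (Nat.doubleFactorial_pos _).ne'
    have hd3 : ((m-k)! : ℝ) ≠ 0 := by positivity
    have hd4 : ((m-1-2*k)! : ℝ) ≠ 0 := by positivity
    have hd5 : ((k)! : ℝ) ≠ 0 := by positivity
    have hmk : (1:ℝ) ≤ (m:ℝ) - 2*k := by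
      have h7 := (Nat.cast_le (α := ℝ)).2 h1
      push_cast at h7; linarith
    have hmk0 : ((m:ℝ) - 2*k) ≠ 0 := by linarith
    have hk1 : ((m:ℝ)+1-k) ≠ 0 := by
      have h7 := (Nat.cast_le (α := ℝ)).2 (show k ≤ m by omega)
      linarith
    have hS3 : S (m+3) (k+1) =
        (((m:ℝ)-2*k) * S (m+2) (k+1) + 2*((m:ℝ)+2) * S (m+1) k) / ((m:ℝ)+1-k) := by
      rw [eq_div_iff hk1]; linarith [htt]
    rw [hS3]
    have hmk0' : ((m:ℝ) - k*2) ≠ 0 := by linarith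
    field_simp
  · rcases le_or_gt (2*k) m with h2 | h2
    · have hm : m = 2*k := by omega
      subst hm
      rw [pt, if_pos (by omega), pt, if_neg (by omega), pt, if_pos (by omega)]
      have e1 : 2*k+3-1-(k+1) = k+1 := by omega
      have e2 : 2*k+3-1-2*(k+1) = 0 := by omega
      have e5 : 2*k+1-1-k = k := by omega
      have e6 : 2*k+1-1-2*k = 0 := by omega
      rw [e1, e2, e5, e6]
      have hS1 : S (2*k+3) (k+1) = 4^(k+1) := by
        rw [S]
        have := Nat.sum_range_choose_halfway (k+1)
        have h7 : 2*(k+1)+1 = 2*k+3 := by omega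
        rw [h7] at this
        exact_mod_cast congrArg (Nat.cast (R := ℝ)) this
      have hS2 : S (2*k+1) k = 4^k := by
        rw [S]
        exact_mod_cast congrArg (Nat.cast (R := ℝ)) (Nat.sum_range_choose_halfway k)
      rw [hS1, hS2]
      have hfc : ((k+1)! : ℝ) = (k+1) * k ! := by
        rw [Nat.factorial_succ]; push_cast; ring
      have hfd : ((2*(k+1))‼ : ℝ) = (2*k+2) * (2*k)‼ := by
        have : 2*(k+1) = 2*k+2 := by omega
        rw [this, Nat.doubleFactorial_add_two]; push_cast; ring
      rw [hfc, hfd]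
      have hd2 : ((2*k)‼ : ℝ) ≠ 0 := by
        exact_mod_cast Nat.cast_ne_zero.2 (Nat.doubleFactorial_pos _).ne'
      have hd5 : ((k)! : ℝ) ≠ 0 := by positivity
      simp only [pow_zero, Nat.factorial_zero]
      rw [pow_succ]
      field_simp
      push_cast; ring
    · rw [pt, if_neg (by omega), pt, if_neg (by omega), pt, if_neg (by omega)]
      ring

lemma pp_rec (m : ℕ) (y : ℝ) : pp (m+3) y = y * pp (m+2) y + (m+2) * pp (m+1) y := by
  rw [pp_eq_sum (m+3) (m+4) (by omega), pp_eq_sum (m+2) (m+4) (by omega),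
    pp_eq_sum (m+1) (m+3) (by omega)]
  rw [Finset.sum_range_succ' (fun k => pt (m+3) k y) (m+3),
    Finset.sum_range_succ' (fun k => pt (m+2) k y) (m+3)]
  have h0 : pt (m+3) 0 y = y * pt (m+2) 0 y := by
    rw [pt_zero _ _ (by omega), pt_zero _ _ (by omega)]
    have e1 : m+3-1 = (m+2-1)+1 := by omega
    rw [e1, pow_succ]; ring
  simp only [pt_step m _ y]
  rw [Finset.sum_add_distrib, ← Finset.mul_sum, ← Finset.mul_sum, mul_add, h0]
  ring

lemma qq_one (y : ℝ) : qq 1 y = y := by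
  rw [qq]
  simp [Finset.sum_range_succ, qt, Nat.doubleFactorial]

lemma qq_two (y : ℝ) : qq 2 y = y^2 + 1 := by
  rw [qq]
  simp [Finset.sum_range_succ, qt, Nat.doubleFactorial]

lemma pp_one (y : ℝ) : pp 1 y = 1 := by
  rw [pp]
  simp [Finset.sum_range_succ, pt, S, Nat.doubleFactorial]

lemma pp_two (y : ℝ) : pp 2 y = y := by
  rw [pp]
  simp [Finset.sum_range_succ, pt, S, Nat.doubleFactorial]

lemma gp_eq (n : ℕ) (y : ℝ) : gp n y = qq (2*n+1) y := by
  have h1 : qq (2*n+1) y = ∑ k ∈ Finset.range (n+1), qt (2*n+1) k y := by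
    rw [qq]
    refine (Finset.sum_subset (Finset.range_subset_range.2 (by omega)) ?_).symm
    intro k _ hk
    simp only [Finset.mem_range, not_lt] at hk
    rw [qt, if_neg (by omega)]
  rw [h1, gp]
  rw [← Finset.sum_range_reflect (fun i => ((2*n+1)! : ℝ) / ((2*(n-i))‼ * (2*i+1)!) * y^(2*i+1)) (n+1)]
  refine Finset.sum_congr rfl ?_
  intro k hk
  simp only [Finset.mem_range] at hk
  have hkn : k ≤ n := by omega
  simp only [Nat.add_sub_cancel]
  rw [qt, if_pos (by omega)]
  have e1 : n - (n - k) = k := by omega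
  have e2 : 2*(n-k)+1 = 2*n+1-2*k := by omega
  rw [e1, e2]
  ring

lemma hp_eq (n : ℕ) (y : ℝ) : hp n y = pp (2*n+1) y := by
  have h1 : pp (2*n+1) y = ∑ k ∈ Finset.range (n+1), pt (2*n+1) k y := by
    rw [pp]
    refine (Finset.sum_subset (Finset.range_subset_range.2 (by omega)) ?_).symm
    intro k _ hk
    simp only [Finset.mem_range, not_lt] at hk
    rw [pt, if_neg (by omega)]
  rw [h1, hp]
  rw [← Finset.sum_range_reflect (fun i => ((n+i)! * (n-i)! : ℝ) / ((2*(n-i))‼ * (2*i)!) *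
    (∑ j ∈ Finset.range (n-i+1), ((2*n+1).choose j : ℝ)) * y^(2*i)) (n+1)]
  refine Finset.sum_congr rfl ?_
  intro k hk
  simp only [Finset.mem_range] at hk
  have hkn : k ≤ n := by omega
  simp only [Nat.add_sub_cancel]
  rw [pt, if_pos (by omega)]
  have e1 : n - (n - k) = k := by omega
  have e2 : 2*(n-k) = 2*n+1-1-2*k := by omega
  have e3 : n + (n-k) = 2*n+1-1-k := by omega
  rw [e1, e2, e3, S]

noncomputable def Phi (y : ℝ) : ℝ := ∫ t in Set.Iic y, Real.exp (-t^2/2)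
noncomputable def B0 (y : ℝ) : ℝ := Real.exp (y^2/2) * Phi y
noncomputable def BB (m : ℕ) (y : ℝ) : ℝ := ∫ s in Set.Ioi (0:ℝ), s^m * Real.exp (y*s - s^2/2)

lemma gauss_int : Integrable (fun t : ℝ => Real.exp (-t^2/2)) := by
  have h := integrable_exp_neg_mul_sq (show (0:ℝ) < 1/2 by norm_num)
  refine h.congr (Filter.Eventually.of_forall fun t => ?_)
  ring_nf

lemma intBB (m : ℕ) (y : ℝ) :
    IntegrableOn (fun s : ℝ => s^m * Real.exp (y*s - s^2/2)) (Set.Ioi 0) := by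
  have hg : Integrable (fun s : ℝ => (m ! : ℝ) * Real.exp ((y+1)^2) * Real.exp (-(1/4) * s^2)) :=
    (integrable_exp_neg_mul_sq (show (0:ℝ) < 1/4 by norm_num)).const_mul _
  refine Integrable.mono' hg.restrict ?_ ?_
  · exact ((continuous_pow m).mul (Real.continuous_exp.comp (by fun_prop))).aestronglyMeasurable
  · rw [ae_restrict_iff' measurableSet_Ioi]
    refine Filter.Eventually.of_forall fun s hs => ?_
    have hs0 : (0:ℝ) ≤ s := le_of_lt hs
    rw [Real.norm_eq_abs, abs_of_nonneg (by positivity)]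
    have h1 : s^m ≤ (m ! : ℝ) * Real.exp s := by
      have h2 := Real.pow_div_factorial_le_exp (x := s) hs0 m
      rw [div_le_iff₀ (by positivity : (0:ℝ) < (m ! : ℝ))] at h2
      linarith [h2]
    calc s^m * Real.exp (y*s - s^2/2)
        ≤ ((m ! : ℝ) * Real.exp s) * Real.exp (y*s - s^2/2) := by
          exact mul_le_mul_of_nonneg_right h1 (Real.exp_pos _).le
      _ = (m ! : ℝ) * Real.exp (s + (y*s - s^2/2)) := by rw [Real.exp_add]; ring
      _ ≤ (m ! : ℝ) * (Real.exp ((y+1)^2) * Real.exp (-(1/4) * s^2)) := by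
          rw [← Real.exp_add]
          refine mul_le_mul_of_nonneg_left (Real.exp_le_exp.2 ?_) (by positivity)
          nlinarith [sq_nonneg ((y+1) - s/2)]
      _ = (m ! : ℝ) * Real.exp ((y+1)^2) * Real.exp (-(1/4) * s^2) := by ring

lemma int_shift (c y : ℝ) (f : ℝ → ℝ) :
    (∫ s in Set.Ioi c, f (s + y)) = ∫ u in Set.Ioi (c + y), f u := by
  have A : MeasurableEmbedding fun x : ℝ => x + y :=
    (Homeomorph.addRight y).isClosedEmbedding.measurableEmbedding
  have h := MeasurableEmbedding.setIntegral_map (μ := volume) A f (Set.Ioi (c + y))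
  rw [map_add_right_eq_self volume y] at h
  have hpre : (fun x : ℝ => x + y) ⁻¹' (Set.Ioi (c + y)) = Set.Ioi c := by
    ext x
    simp only [Set.mem_preimage, Set.mem_Ioi]
    constructor <;> intro h' <;> linarith
  rw [hpre] at h
  exact h.symm

lemma BB_zero (y : ℝ) : BB 0 y = B0 y := by
  rw [BB, B0, Phi]
  have h1 : ∀ s : ℝ, s^0 * Real.exp (y*s - s^2/2)
      = Real.exp (y^2/2) * Real.exp (-(s + -y)^2/2) := by
    intro s
    rw [pow_zero, one_mul, ← Real.exp_add]
    congr 1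
    ring
  simp_rw [h1]
  rw [MeasureTheory.integral_const_mul]
  congr 1
  have h2 := int_shift 0 (-y) (fun u => Real.exp (-u^2/2))
  rw [h2, zero_add]
  have h3 := integral_comp_neg_Iic y (fun u => Real.exp (-u^2/2))
  simp only [neg_sq] at h3 ⊢
  rw [← h3]

lemma tendsto_bnd (m : ℕ) (y : ℝ) :
    Filter.Tendsto (fun s : ℝ => s^m * Real.exp (y*s - s^2/2)) Filter.atTop (nhds 0) := by
  have hup : Filter.Tendsto (fun s : ℝ => Real.exp ((y+1)^2/2) * (s^m * Real.exp (-s)))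
      Filter.atTop (nhds 0) := by
    have := tendsto_pow_mul_exp_neg_atTop_nhds_zero m
    simpa using this.const_mul (Real.exp ((y+1)^2/2))
  refine squeeze_zero' ?_ ?_ hup
  · filter_upwards [Filter.eventually_ge_atTop (0:ℝ)] with s hs
    positivity
  · filter_upwards [Filter.eventually_ge_atTop (0:ℝ)] with s hs
    have : s^m * Real.exp (y*s - s^2/2) = (s^m * Real.exp (-s)) * Real.exp ((y+1)*s - s^2/2) := by
      rw [mul_assoc, ← Real.exp_add]
      congr 2
      ring
    rw [this]
    have h2 : Real.exp ((y+1)*s - s^2/2) ≤ Real.exp ((y+1)^2/2) :=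
      Real.exp_le_exp.2 (by nlinarith [sq_nonneg ((y+1) - s)])
    calc (s^m * Real.exp (-s)) * Real.exp ((y+1)*s - s^2/2)
        ≤ (s^m * Real.exp (-s)) * Real.exp ((y+1)^2/2) :=
          mul_le_mul_of_nonneg_left h2 (by positivity)
      _ = Real.exp ((y+1)^2/2) * (s^m * Real.exp (-s)) := by ring

lemma hasDeriv_inner (y s : ℝ) : HasDerivAt (fun u : ℝ => y*u - u^2/2) (y - s) s := by
  have h1 : HasDerivAt (fun u : ℝ => y*u) y s := by
    simpa using (hasDerivAt_id s).const_mul y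
  have h2 : HasDerivAt (fun u : ℝ => u^2/2) s s := by
    have := (hasDerivAt_pow 2 s).div_const 2
    simpa using this
  exact h1.sub h2

lemma BB_one (y : ℝ) : BB 1 y = y * BB 0 y + 1 := by
  have hder : ∀ s ∈ Set.Ioi (0:ℝ),
      HasDerivAt (fun u : ℝ => -(Real.exp (y*u - u^2/2)))
        (s^1 * Real.exp (y*s - s^2/2) - y * (s^0 * Real.exp (y*s - s^2/2))) s := by
    intro s _
    have h := ((hasDeriv_inner y s).exp).neg
    refine h.congr_deriv (Eq.symm ?_)
    simp
    ring
  have hint : IntegrableOn (fun s : ℝ =>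
      s^1 * Real.exp (y*s - s^2/2) - y * (s^0 * Real.exp (y*s - s^2/2))) (Set.Ioi 0) :=
    (intBB 1 y).sub ((intBB 0 y).const_mul y)
  have htend : Filter.Tendsto (fun s : ℝ => -(Real.exp (y*s - s^2/2)))
      Filter.atTop (nhds 0) := by
    have := (tendsto_bnd 0 y).neg
    simp only [pow_zero, one_mul, neg_zero] at this
    exact this
  have hcont : ContinuousWithinAt (fun s : ℝ => -(Real.exp (y*s - s^2/2))) (Set.Ici 0) 0 :=
    ((Real.continuous_exp.comp (by fun_prop)).neg).continuousWithinAt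
  have h := integral_Ioi_of_hasDerivAt_of_tendsto hcont hder hint htend
  have h0 : -(Real.exp (y*0 - 0^2/2)) = -1 := by norm_num
  rw [h0] at h
  have e1 : (∫ s in Set.Ioi (0:ℝ),
      (s^1 * Real.exp (y*s - s^2/2) - y * (s^0 * Real.exp (y*s - s^2/2))))
      = (∫ s in Set.Ioi (0:ℝ), s^1 * Real.exp (y*s - s^2/2))
        - ∫ s in Set.Ioi (0:ℝ), y * (s^0 * Real.exp (y*s - s^2/2)) :=
    MeasureTheory.integral_sub (intBB 1 y) ((intBB 0 y).const_mul y)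
  have e2 : (∫ s in Set.Ioi (0:ℝ), y * (s^0 * Real.exp (y*s - s^2/2)))
      = y * ∫ s in Set.Ioi (0:ℝ), s^0 * Real.exp (y*s - s^2/2) :=
    MeasureTheory.integral_const_mul y _
  rw [e1, e2] at h
  rw [BB, BB]
  linarith [h]

lemma BB_step (m : ℕ) (y : ℝ) : BB (m+2) y = y * BB (m+1) y + (m+1) * BB m y := by
  have hder : ∀ s ∈ Set.Ioi (0:ℝ),
      HasDerivAt (fun u : ℝ => -(u^(m+1) * Real.exp (y*u - u^2/2)))
        (s^(m+2) * Real.exp (y*s - s^2/2) - y * (s^(m+1) * Real.exp (y*s - s^2/2))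
          - (m+1) * (s^m * Real.exp (y*s - s^2/2))) s := by
    intro s _
    have h := ((hasDerivAt_pow (m+1) s).mul ((hasDeriv_inner y s).exp)).neg
    refine h.congr_deriv (Eq.symm ?_)
    simp only [Nat.add_sub_cancel, Nat.cast_add, Nat.cast_one]
    rw [pow_succ, pow_succ]
    ring
  have hint : IntegrableOn (fun s : ℝ =>
      s^(m+2) * Real.exp (y*s - s^2/2) - y * (s^(m+1) * Real.exp (y*s - s^2/2))
        - (m+1) * (s^m * Real.exp (y*s - s^2/2))) (Set.Ioi 0) :=
    ((intBB (m+2) y).sub ((intBB (m+1) y).const_mul y)).sub ((intBB m y).const_mul _)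
  have htend : Filter.Tendsto (fun s : ℝ => -(s^(m+1) * Real.exp (y*s - s^2/2)))
      Filter.atTop (nhds 0) := by
    have := (tendsto_bnd (m+1) y).neg
    simpa using this
  have hcont : ContinuousWithinAt (fun s : ℝ => -(s^(m+1) * Real.exp (y*s - s^2/2)))
      (Set.Ici 0) 0 :=
    (((continuous_pow (m+1)).mul (Real.continuous_exp.comp (by fun_prop))).neg).continuousWithinAt
  have h := integral_Ioi_of_hasDerivAt_of_tendsto hcont hder hint htend
  have h0 : -((0:ℝ)^(m+1) * Real.exp (y*0 - 0^2/2)) = 0 := by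
    rw [zero_pow (by omega)]
    ring
  rw [h0, sub_zero] at h
  have e1 : (∫ s in Set.Ioi (0:ℝ),
      (s^(m+2) * Real.exp (y*s - s^2/2) - y * (s^(m+1) * Real.exp (y*s - s^2/2))
        - ((m:ℝ)+1) * (s^m * Real.exp (y*s - s^2/2))))
      = (∫ s in Set.Ioi (0:ℝ),
          (s^(m+2) * Real.exp (y*s - s^2/2) - y * (s^(m+1) * Real.exp (y*s - s^2/2))))
        - ∫ s in Set.Ioi (0:ℝ), ((m:ℝ)+1) * (s^m * Real.exp (y*s - s^2/2)) :=
    MeasureTheory.integral_sub ((intBB (m+2) y).sub ((intBB (m+1) y).const_mul y))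
      ((intBB m y).const_mul _)
  have e2 : (∫ s in Set.Ioi (0:ℝ),
      (s^(m+2) * Real.exp (y*s - s^2/2) - y * (s^(m+1) * Real.exp (y*s - s^2/2))))
      = (∫ s in Set.Ioi (0:ℝ), s^(m+2) * Real.exp (y*s - s^2/2))
        - ∫ s in Set.Ioi (0:ℝ), y * (s^(m+1) * Real.exp (y*s - s^2/2)) :=
    MeasureTheory.integral_sub (intBB (m+2) y) ((intBB (m+1) y).const_mul y)
  have e3 : (∫ s in Set.Ioi (0:ℝ), y * (s^(m+1) * Real.exp (y*s - s^2/2)))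
      = y * ∫ s in Set.Ioi (0:ℝ), s^(m+1) * Real.exp (y*s - s^2/2) :=
    MeasureTheory.integral_const_mul y _
  have e4 : (∫ s in Set.Ioi (0:ℝ), ((m:ℝ)+1) * (s^m * Real.exp (y*s - s^2/2)))
      = ((m:ℝ)+1) * ∫ s in Set.Ioi (0:ℝ), s^m * Real.exp (y*s - s^2/2) :=
    MeasureTheory.integral_const_mul _ _
  rw [e1, e2, e3, e4] at h
  rw [BB, BB, BB]
  linarith [h]


lemma nonneg_ae (m : ℕ) (y : ℝ) :
    0 ≤ᵐ[volume.restrict (Set.Ioi (0:ℝ))] fun s : ℝ => s^m * Real.exp (y*s - s^2/2) := by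
  refine (ae_restrict_iff' measurableSet_Ioi).2 (Filter.Eventually.of_forall fun s hs => ?_)
  have hs0 : (0:ℝ) < s := hs
  simp only [Pi.zero_apply]
  positivity

lemma BB_pos (m : ℕ) (y : ℝ) : 0 < BB m y := by
  rw [BB]
  refine (setIntegral_pos_iff_support_of_nonneg_ae (nonneg_ae m y) (intBB m y)).2 ?_
  have hsub : Set.Ioi (0:ℝ) ⊆ Function.support (fun s : ℝ => s^m * Real.exp (y*s - s^2/2))
      ∩ Set.Ioi 0 := by
    intro s hs
    have hs0 : (0:ℝ) < s := hs
    refine ⟨?_, hs⟩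
    simp only [Function.mem_support]
    positivity
  calc (0:ENNReal) < volume (Set.Ioi (0:ℝ)) := by simp
    _ ≤ volume _ := measure_mono hsub

lemma BB_lt (m : ℕ) {y1 y2 : ℝ} (h : y1 < y2) : BB m y1 < BB m y2 := by
  have hae : 0 ≤ᵐ[volume.restrict (Set.Ioi (0:ℝ))]
      fun s : ℝ => s^m * Real.exp (y2*s - s^2/2) - s^m * Real.exp (y1*s - s^2/2) := by
    refine (ae_restrict_iff' measurableSet_Ioi).2 (Filter.Eventually.of_forall fun s hs => ?_)
    have hs0 : (0:ℝ) < s := hs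
    have hlt : Real.exp (y1*s - s^2/2) ≤ Real.exp (y2*s - s^2/2) :=
      Real.exp_le_exp.2 (by nlinarith)
    have hp : (0:ℝ) ≤ s^m := by positivity
    simp only [Pi.zero_apply]
    nlinarith
  have hintd : IntegrableOn
      (fun s : ℝ => s^m * Real.exp (y2*s - s^2/2) - s^m * Real.exp (y1*s - s^2/2))
      (Set.Ioi (0:ℝ)) := (intBB m y2).sub (intBB m y1)
  have key : 0 < ∫ s in Set.Ioi (0:ℝ),
      (s^m * Real.exp (y2*s - s^2/2) - s^m * Real.exp (y1*s - s^2/2)) := by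
    refine (setIntegral_pos_iff_support_of_nonneg_ae hae hintd).2 ?_
    have hsub : Set.Ioi (0:ℝ) ⊆ Function.support (fun s : ℝ =>
        s^m * Real.exp (y2*s - s^2/2) - s^m * Real.exp (y1*s - s^2/2)) ∩ Set.Ioi 0 := by
      intro s hs
      have hs0 : (0:ℝ) < s := hs
      refine ⟨?_, hs⟩
      simp only [Function.mem_support]
      have hlt : Real.exp (y1*s - s^2/2) < Real.exp (y2*s - s^2/2) :=
        Real.exp_lt_exp.2 (by nlinarith)
      have hsp : (0:ℝ) < s^m := by positivity
      intro hzero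
      nlinarith [hzero]
    calc (0:ENNReal) < volume (Set.Ioi (0:ℝ)) := by simp
      _ ≤ volume _ := measure_mono hsub
  have hsplit : (∫ s in Set.Ioi (0:ℝ),
      (s^m * Real.exp (y2*s - s^2/2) - s^m * Real.exp (y1*s - s^2/2)))
      = BB m y2 - BB m y1 :=
    MeasureTheory.integral_sub (intBB m y2) (intBB m y1)
  rw [hsplit] at key
  linarith

lemma exp_decay_int {c : ℝ} (hc : 0 < c) :
    (∫ s in Set.Ioi (0:ℝ), Real.exp (-(c*s))) = 1/c := by
  have hder : ∀ s ∈ Set.Ioi (0:ℝ),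
      HasDerivAt (fun u : ℝ => -(Real.exp (-(c*u)))/c) (Real.exp (-(c*s))) s := by
    intro s _
    have h1 : HasDerivAt (fun u : ℝ => -(c*u)) (-c) s := by
      have h := ((hasDerivAt_id' s).const_mul c).neg; rw [mul_one] at h; exact h
    have h2 := (h1.exp).neg.div_const c
    refine h2.congr_deriv (Eq.symm ?_)
    field_simp
  have hint : IntegrableOn (fun s : ℝ => Real.exp (-(c*s))) (Set.Ioi 0) := by
    have h3 := exp_neg_integrableOn_Ioi 0 hc
    exact h3.congr_fun (fun s _ => by ring_nf) measurableSet_Ioi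
  have htend : Filter.Tendsto (fun s : ℝ => -(Real.exp (-(c*s)))/c)
      Filter.atTop (nhds 0) := by
    have h1 : Filter.Tendsto (fun s : ℝ => c*s) Filter.atTop Filter.atTop :=
      (Filter.tendsto_id.const_mul_atTop hc)
    have h2 := (Real.tendsto_exp_neg_atTop_nhds_zero.comp h1).neg.div_const c
    simpa using h2
  have hcont : ContinuousWithinAt (fun u : ℝ => -(Real.exp (-(c*u)))/c) (Set.Ici 0) 0 :=
    ((Real.continuous_exp.comp (by fun_prop)).neg.div_const c).continuousWithinAt
  have h := integral_Ioi_of_hasDerivAt_of_tendsto hcont hder hint htend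
  rw [h]
  norm_num
  field_simp

lemma BB_le (m : ℕ) {y : ℝ} (h : y < -1) : BB m y ≤ (m ! : ℝ) / (-(y+1)) := by
  have hc : (0:ℝ) < -(y+1) := by linarith
  have hint2 : IntegrableOn (fun s : ℝ => (m ! : ℝ) * Real.exp (-(-(y+1)*s))) (Set.Ioi 0) := by
    have hb := exp_neg_integrableOn_Ioi 0 hc
    exact (hb.congr_fun (fun s _ => by ring_nf) measurableSet_Ioi).const_mul _
  have hmono : BB m y ≤ ∫ s in Set.Ioi (0:ℝ), (m ! : ℝ) * Real.exp (-(-(y+1)*s)) := by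
    rw [BB]
    refine setIntegral_mono_on (intBB m y) hint2 measurableSet_Ioi ?_
    intro s hs
    have hs0 : (0:ℝ) ≤ s := le_of_lt hs
    have h1 : s^m ≤ (m ! : ℝ) * Real.exp s := by
      have h2 := Real.pow_div_factorial_le_exp (x := s) hs0 m
      rw [div_le_iff₀ (by positivity : (0:ℝ) < (m ! : ℝ))] at h2
      linarith [h2]
    calc s^m * Real.exp (y*s - s^2/2)
        ≤ ((m ! : ℝ) * Real.exp s) * Real.exp (y*s - s^2/2) :=
          mul_le_mul_of_nonneg_right h1 (Real.exp_pos _).le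
      _ = (m ! : ℝ) * Real.exp (s + (y*s - s^2/2)) := by rw [Real.exp_add]; ring
      _ ≤ (m ! : ℝ) * Real.exp (-(-(y+1)*s)) := by
          refine mul_le_mul_of_nonneg_left (Real.exp_le_exp.2 ?_) (by positivity)
          nlinarith [sq_nonneg s]
  calc BB m y ≤ ∫ s in Set.Ioi (0:ℝ), (m ! : ℝ) * Real.exp (-(-(y+1)*s)) := hmono
    _ = (m ! : ℝ) * (1/(-(y+1))) := by
        rw [MeasureTheory.integral_const_mul, exp_decay_int hc]
    _ = (m ! : ℝ) / (-(y+1)) := by ring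

lemma BB_ge (m : ℕ) {y : ℝ} (h : 0 ≤ y) : Real.exp (y - 2) ≤ BB m y := by
  have h1 : (∫ _s in Set.Ioc (1:ℝ) 2, Real.exp (y - 2)) ≤
      ∫ s in Set.Ioc (1:ℝ) 2, s^m * Real.exp (y*s - s^2/2) := by
    refine setIntegral_mono_on (by simp) ?_ measurableSet_Ioc ?_
    · exact (intBB m y).mono_set (fun s hs => lt_trans zero_lt_one hs.1)
    · intro s hs
      obtain ⟨hs1, hs2⟩ := hs
      have hsm : (1:ℝ) ≤ s^m := one_le_pow₀ hs1.le
      calc Real.exp (y - 2) ≤ Real.exp (y*s - s^2/2) :=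
            Real.exp_le_exp.2 (by nlinarith)
        _ ≤ s^m * Real.exp (y*s - s^2/2) := by
            nlinarith [Real.exp_pos (y*s - s^2/2)]
  have h2 : (∫ _s in Set.Ioc (1:ℝ) 2, Real.exp (y - 2)) = Real.exp (y - 2) := by
    rw [setIntegral_const, Real.volume_real_Ioc]
    norm_num
  have h3 : (∫ s in Set.Ioc (1:ℝ) 2, s^m * Real.exp (y*s - s^2/2)) ≤ BB m y := by
    rw [BB]
    refine setIntegral_mono_set (intBB m y) (nonneg_ae m y) ?_
    exact HasSubset.Subset.eventuallyLE (fun s hs => lt_trans zero_lt_one hs.1)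
  linarith

lemma cont_Phi : Continuous Phi := by
  have hrep : Phi = fun y => (∫ t in Set.Iic (0:ℝ), Real.exp (-t^2/2))
      + ∫ t in (0:ℝ)..y, Real.exp (-t^2/2) := by
    funext y
    have h4 := intervalIntegral.integral_Iic_sub_Iic (gauss_int.integrableOn) (gauss_int.integrableOn)
      (a := 0) (b := y)
    rw [Phi]
    linarith [h4]
  rw [hrep]
  exact continuous_const.add
    (intervalIntegral.continuous_primitive (fun a b => gauss_int.intervalIntegrable) 0)


lemma cont_pt (M k : ℕ) : Continuous (fun y => pt M k y) := by
  unfold pt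
  by_cases h : 2*k+1 ≤ M
  · simp only [if_pos h]
    fun_prop
  · simp only [if_neg h]
    exact continuous_const

lemma cont_qt (M k : ℕ) : Continuous (fun y => qt M k y) := by
  unfold qt
  by_cases h : 2*k ≤ M
  · simp only [if_pos h]
    fun_prop
  · simp only [if_neg h]
    exact continuous_const

lemma cont_pp (M : ℕ) : Continuous (fun y => pp M y) := by
  unfold pp
  exact continuous_finset_sum _ (fun k _ => cont_pt M k)

lemma cont_qq (M : ℕ) : Continuous (fun y => qq M y) := by
  unfold qq
  exact continuous_finset_sum _ (fun k _ => cont_qt M k)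

lemma cont_B0 : Continuous B0 := by
  unfold B0
  exact (by fun_prop : Continuous fun y : ℝ => Real.exp (y^2/2)).mul cont_Phi

lemma BB_repr (m : ℕ) (y : ℝ) : BB (m+1) y = pp (m+1) y + qq (m+1) y * B0 y := by
  have key : ∀ m, (∀ y : ℝ, BB (m+1) y = pp (m+1) y + qq (m+1) y * B0 y) ∧
      (∀ y : ℝ, BB (m+2) y = pp (m+2) y + qq (m+2) y * B0 y) := by
    intro m
    induction m with
    | zero =>
      constructor
      · intro y
        rw [BB_one, BB_zero, pp_one, qq_one]
        ring
      · intro y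
        have h2 := BB_step 0 y
        rw [BB_one, BB_zero] at h2
        rw [h2, pp_two, qq_two]
        push_cast
        ring
    | succ k ih =>
      refine ⟨ih.2, fun y => ?_⟩
      have h := BB_step (k+1) y
      rw [ih.1 y, ih.2 y] at h
      rw [show k+1+2 = k+3 from rfl] at h
      rw [show k+2+1 = k+3 from rfl, h, pp_rec k y, qq_rec (k+1) y]
      push_cast
      ring
  exact (key m).1 y

lemma gp_odd (n : ℕ) (x : ℝ) : gp n (-x) = -gp n x := by
  rw [gp, gp, ← Finset.sum_neg_distrib]
  refine Finset.sum_congr rfl fun i _ => ?_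
  rw [Odd.neg_pow ⟨i, by ring⟩]
  ring

lemma hp_even (n : ℕ) (x : ℝ) : hp n (-x) = hp n x := by
  rw [hp, hp]
  refine Finset.sum_congr rfl fun i _ => ?_
  rw [Even.neg_pow ⟨i, by ring⟩]

theorem stmt10 (σ : ℝ) (hσ : σ ∈ Set.Ioo (0:ℝ) 1) (n : ℕ) (hn : 1 ≤ n) :
    ∃! x₀ : ℝ, x₀ < 0 ∧
      hp (n-1) (x₀/σ) + gp (n-1) (x₀/σ) * Real.exp (x₀^2/(2*σ^2))
          * (∫ t in Set.Iic (x₀/σ), Real.exp (-t^2/2))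
        - σ^(2*n) * hp (n-1) x₀
        + σ^(2*n) * gp (n-1) x₀ * Real.exp (x₀^2/2)
          * (∫ t in Set.Ioi x₀, Real.exp (-t^2/2)) = 0 := by
  obtain ⟨hσ0, hσ1⟩ := hσ
  obtain ⟨N, rfl⟩ : ∃ N, n = N + 1 := ⟨n - 1, by omega⟩
  have hσne : σ ≠ 0 := ne_of_gt hσ0
  set m : ℕ := 2*N+1 with hm
  set r : ℝ := σ^(2*(N+1)) with hr
  have hr0 : 0 < r := pow_pos hσ0 _
  have hr1 : r < 1 := pow_lt_one₀ (le_of_lt hσ0) hσ1 (by omega)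
  set F : ℝ → ℝ := fun x => BB m (x/σ) - r * BB m (-x) with hF
  have hPhidef : ∀ y : ℝ, (∫ t in Set.Iic y, Real.exp (-t^2/2)) = Phi y := fun y => rfl
  have hPsi : ∀ x : ℝ, (∫ t in Set.Ioi x, Real.exp (-t^2/2)) = Phi (-x) := by
    intro x
    have h3 := integral_comp_neg_Iic (-x) (fun u => Real.exp (-u^2/2))
    simp only [neg_sq, neg_neg] at h3
    rw [Phi]
    exact h3.symm
  have hrepr : ∀ u : ℝ, hp N u + gp N u * Real.exp (u^2/2) * Phi u = BB m u := by
    intro u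
    have h := BB_repr (2*N) u
    rw [B0] at h
    rw [hp_eq, gp_eq, hm]
    rw [show 2*N+1 = 2*N+1 from rfl]
    rw [h]
    ring
  have hkey : ∀ x : ℝ, hp N (x/σ) + gp N (x/σ) * Real.exp (x^2/(2*σ^2))
          * (∫ t in Set.Iic (x/σ), Real.exp (-t^2/2))
        - σ^(2*(N+1)) * hp N x
        + σ^(2*(N+1)) * gp N x * Real.exp (x^2/2)
          * (∫ t in Set.Ioi x, Real.exp (-t^2/2)) = F x := by
    intro x
    have e1 : x^2/(2*σ^2) = (x/σ)^2/2 := by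
      rw [div_pow]
      ring
    rw [e1, hPhidef, hPsi]
    have h2 : hp N x - gp N x * Real.exp (x^2/2) * Phi (-x) = BB m (-x) := by
      have h5 := hrepr (-x)
      rw [hp_even, gp_odd, neg_sq] at h5
      linear_combination h5
    have h1 := hrepr (x/σ)
    simp only [hF]
    linear_combination h1 - σ^(2*(N+1)) * h2
  have hBBcont : Continuous (fun y => BB m y) := by
    have hrw : (fun y => BB m y) = fun y => pp m y + qq m y * B0 y :=
      funext fun y => BB_repr (2*N) y
    rw [hrw]
    exact (cont_pp m).add ((cont_qq m).mul cont_B0)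
  have hFcont : Continuous F := by
    simp only [hF]
    exact (hBBcont.comp (continuous_id.div_const σ)).sub
      (continuous_const.mul (hBBcont.comp continuous_neg))
  have hFmono : StrictMono F := by
    intro a b hab
    have h1 : BB m (a/σ) < BB m (b/σ) := BB_lt m ((div_lt_div_iff_of_pos_right hσ0).2 hab)
    have h2 : BB m (-b) < BB m (-a) := BB_lt m (by linarith)
    simp only [hF]
    have h3 := mul_lt_mul_of_pos_left h2 hr0
    linarith
  have hF0 : 0 < F 0 := by
    simp only [hF]
    rw [zero_div, neg_zero]
    nlinarith [BB_pos m 0, hr1, hr0]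
  set M0 : ℝ := ((2*N+1)! : ℝ) with hM0
  have hM0pos : 0 < M0 := by positivity
  set L : ℝ := Real.log ((M0+1)/r) with hL
  have hLnn : 0 ≤ L := Real.log_nonneg (by rw [le_div_iff₀ hr0]; nlinarith)
  set a : ℝ := -(3 + L) with ha
  have ha0 : a < 0 := by
    rw [ha]
    linarith
  have hFa : F a < 0 := by
    have hay : a/σ < -1 := by
      rw [div_lt_iff₀ hσ0]
      nlinarith
    have haa : a/σ ≤ a := by
      rw [div_le_iff₀ hσ0]
      nlinarith
    have h1 : BB m (a/σ) ≤ M0 / (-(a/σ+1)) := BB_le m hay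
    have h2 : M0 / (-(a/σ+1)) ≤ M0 / (-(a+1)) :=
      div_le_div_of_nonneg_left hM0pos.le (by rw [ha]; linarith) (by linarith)
    have h3 : Real.exp (-a - 2) ≤ BB m (-a) := BB_ge m (by linarith)
    have h4 : Real.exp (-a - 2) = Real.exp 1 * ((M0+1)/r) := by
      have e2 : -a - 2 = 1 + L := by rw [ha]; ring
      rw [e2, Real.exp_add, Real.exp_log (by positivity)]
    have h5 : Real.exp 1 * (M0+1) ≤ r * BB m (-a) := by
      have h5a : r * Real.exp (-a-2) ≤ r * BB m (-a) :=
        mul_le_mul_of_nonneg_left h3 hr0.le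
      have h5b : r * Real.exp (-a-2) = Real.exp 1 * (M0+1) := by
        rw [h4]
        field_simp
      linarith
    have h6 : M0 / (-(a+1)) ≤ M0 := div_le_self hM0pos.le (by rw [ha]; linarith)
    have hexp1 : (1:ℝ) < Real.exp 1 := by
      have := Real.add_one_lt_exp (by norm_num : (1:ℝ) ≠ 0)
      linarith
    simp only [hF]
    have hMe : M0 < Real.exp 1 * (M0+1) := by nlinarith
    have hfin : BB m (a/σ) < r * BB m (-a) := by linarith
    linarith
  have hiv := intermediate_value_Icc (le_of_lt ha0) hFcont.continuousOn
  obtain ⟨x₀, hx₀mem, hFx₀⟩ := hiv ⟨le_of_lt hFa, le_of_lt hF0⟩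
  have hx₀neg : x₀ < 0 := by
    by_contra hcon
    push_neg at hcon
    have h7 : F 0 ≤ F x₀ := hFmono.monotone hcon
    rw [hFx₀] at h7
    linarith
  refine ⟨x₀, ⟨hx₀neg, ?_⟩, ?_⟩
  · simp only [Nat.add_sub_cancel]
    rw [hkey x₀]
    exact hFx₀
  · rintro x' ⟨hx'neg, hx'⟩
    simp only [Nat.add_sub_cancel] at hx'
    rw [hkey x'] at hx'
    exact hFmono.injective (hx'.trans hFx₀.symm)
end

section
/- Let P : ℝ → ℝ be twice continuously differentiable, n ≥ 1 an integer, σ ∈ (0,1], and suppose P satisfies (P''(x))^+ - σ² (P''(x))^- + x P'(x) - (2n+1) P(x) = 0 for all x ∈ ℝ. Define u(t,x) := t^{n+1/2} P(x/√t) for t > 0. Then for all t > 0 and x ∈ ℝ, u satisfies the G-heat equation ∂u/∂t = (1/2)[ (∂²u/∂x²)^+ - σ² (∂²u/∂x²)^- ], where a^+ = max(a,0) and a^- = max(-a,0). -/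
theorem stmt19 (n : ℕ) (hn : 1 ≤ n) (σ : ℝ) (hσ : σ ∈ Set.Ioc (0:ℝ) 1)
    (P : ℝ → ℝ) (hP : ContDiff ℝ 2 P)
    (hode : ∀ x : ℝ, max (deriv (deriv P) x) 0 - σ^2 * max (-(deriv (deriv P) x)) 0
        + x * deriv P x - (2*n+1) * P x = 0) :
    ∀ t : ℝ, 0 < t → ∀ x : ℝ,
      deriv (fun s : ℝ => s ^ ((n:ℝ) + 1/2) * P (x / Real.sqrt s)) t
        = 1/2 * (max (deriv (deriv (fun y : ℝ => t ^ ((n:ℝ) + 1/2) * P (y / Real.sqrt t))) x) 0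
            - σ^2 * max (-(deriv (deriv (fun y : ℝ => t ^ ((n:ℝ) + 1/2) * P (y / Real.sqrt t))) x)) 0) := by
  intro t ht x
  have hst : 0 < Real.sqrt t := Real.sqrt_pos.mpr ht
  have hst2 : Real.sqrt t ^ 2 = t := Real.sq_sqrt ht.le
  set y : ℝ := x / Real.sqrt t with hy
  -- differentiability facts
  have hPd : ∀ z, HasDerivAt P (deriv P z) z := fun z =>
    ((hP.differentiable (by norm_num)) z).hasDerivAt
  have hP2 : ContDiff ℝ ((1:ℕ) + 1) P := by exact_mod_cast hP
  have hP' : ContDiff ℝ 1 (deriv P) := ((contDiff_succ_iff_deriv.mp hP2).2).2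
  have hP'd : ∀ z, HasDerivAt (deriv P) (deriv (deriv P) z) z := fun z =>
    ((hP'.differentiable (by norm_num)) z).hasDerivAt
  -- left-hand side derivative
  have hsq : HasDerivAt Real.sqrt (1 / (2 * Real.sqrt t)) t := Real.hasDerivAt_sqrt (ne_of_gt ht)
  have hinner : HasDerivAt (fun s : ℝ => x / Real.sqrt s)
      ((0 * Real.sqrt t - x * (1 / (2 * Real.sqrt t))) / (Real.sqrt t) ^ 2) t :=
    (hasDerivAt_const t x).div hsq (ne_of_gt hst)
  have hcomp : HasDerivAt (fun s : ℝ => P (x / Real.sqrt s))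
      (deriv P y * ((0 * Real.sqrt t - x * (1 / (2 * Real.sqrt t))) / (Real.sqrt t) ^ 2)) t :=
    (hPd y).comp t hinner
  have hpow : HasDerivAt (fun s : ℝ => s ^ ((n:ℝ) + 1/2))
      (((n:ℝ) + 1/2) * t ^ ((n:ℝ) + 1/2 - 1)) t :=
    Real.hasDerivAt_rpow_const (Or.inl (ne_of_gt ht))
  have hL : deriv (fun s : ℝ => s ^ ((n:ℝ) + 1/2) * P (x / Real.sqrt s)) t = _ := (hpow.mul hcomp).deriv
  rw [hL]
  -- right-hand side second derivative
  have hlin : ∀ z : ℝ, HasDerivAt (fun y : ℝ => y / Real.sqrt t) (1 / Real.sqrt t) z := by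
    intro z
    simpa using (hasDerivAt_id z).div_const (Real.sqrt t)
  have hU1 : ∀ z : ℝ, HasDerivAt (fun y : ℝ => t ^ ((n:ℝ) + 1/2) * P (y / Real.sqrt t))
      (t ^ ((n:ℝ) + 1/2) * (deriv P (z / Real.sqrt t) * (1 / Real.sqrt t))) z := fun z =>
    ((hPd (z / Real.sqrt t)).comp z (hlin z)).const_mul _
  have hderiv1 : deriv (fun y : ℝ => t ^ ((n:ℝ) + 1/2) * P (y / Real.sqrt t))
      = fun z => t ^ ((n:ℝ) + 1/2) * (deriv P (z / Real.sqrt t) * (1 / Real.sqrt t)) :=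
    funext fun z => (hU1 z).deriv
  rw [hderiv1]
  have hU2 : HasDerivAt (fun z : ℝ => t ^ ((n:ℝ) + 1/2) * (deriv P (z / Real.sqrt t) * (1 / Real.sqrt t)))
      (t ^ ((n:ℝ) + 1/2) * ((deriv (deriv P) y * (1 / Real.sqrt t)) * (1 / Real.sqrt t))) x :=
    (((hP'd y).comp x (hlin x)).mul_const _).const_mul _
  rw [hU2.deriv]
  -- algebra
  set A : ℝ := t ^ ((n:ℝ) + 1/2) with hA
  have hApos : 0 < A := Real.rpow_pos_of_pos ht _
  have hApow : t ^ ((n:ℝ) + 1/2 - 1) = A / t := by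
    rw [hA, Real.rpow_sub ht, Real.rpow_one]
  set D : ℝ := deriv (deriv P) y with hD
  have hsimp : A * (D * (1 / Real.sqrt t) * (1 / Real.sqrt t)) = (A / t) * D := by
    field_simp
    rw [hst2]
  rw [hsimp, hApow]
  have hB : 0 ≤ A / t := le_of_lt (div_pos hApos ht)
  have hmax1 : max (A / t * D) 0 = (A / t) * max D 0 := by
    rw [mul_max_of_nonneg _ _ hB, mul_zero]
  have hmax2 : max (-(A / t * D)) 0 = (A / t) * max (-D) 0 := by
    rw [← mul_neg, mul_max_of_nonneg _ _ hB, mul_zero]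
  rw [hmax1, hmax2]
  have hode' : max D 0 - σ^2 * max (-D) 0 = (2*(n:ℝ)+1) * P y - y * deriv P y := by
    have := hode y
    rw [← hD] at this
    linarith
  have hx : x = y * Real.sqrt t := by
    rw [hy]; field_simp
  rw [show x / Real.sqrt t = y from rfl, hx]
  have hstne : Real.sqrt t ≠ 0 := ne_of_gt hst
  have htne : t ≠ 0 := ne_of_gt ht
  calc ((n:ℝ) + 1/2) * (A / t) * P y
        + A * (deriv P y * ((0 * Real.sqrt t - y * Real.sqrt t * (1 / (2 * Real.sqrt t))) / Real.sqrt t ^ 2))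
      = (A / t) * (((n:ℝ) + 1/2) * P y - y / 2 * deriv P y) := by
        rw [hst2]; field_simp; ring
    _ = 1/2 * (A / t * max D 0 - σ^2 * (A / t * max (-D) 0)) := by
        have : A / t * max D 0 - σ^2 * (A / t * max (-D) 0)
            = (A / t) * (max D 0 - σ^2 * max (-D) 0) := by ring
        rw [this, hode']; ring
end
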